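/- Let F = ℤ/2ℤ and let R = F[U] be the polynomial ring over F. Let M be an R-module equipped with an internal direct sum decomposition M = ⊕_{i∈ℤ} M_i into F-subspaces such that U·M_i ⊆ M_{i−1} for every i ∈ ℤ. Then for every j ∈ ℤ and every homogeneous element x ∈ M_j, the following are equivalent: (a) there exists y ∈ M with x = y − U·y (i.e. x lies in the image of multiplication by 1 − U); (b) there exists n ≥ 0 with Uⁿ·x = 0 (i.e. x is U-torsion). -/
import Mathlib


/-- Let `F = ℤ/2ℤ` and `R = F[U]`.  Let `M` be an `R`-module with an
internal direct sum decomposition `M = ⊕_{i ∈ ℤ} M_i` into `F`-subspaces such that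
`U • M_i ⊆ M_{i-1}` for all `i`.  Then for every `j ∈ ℤ` and every homogeneous element
`x ∈ M_j`, we have: `x` lies in the image of multiplication by `1 - U` (i.e.
`∃ y, x = y - U • y`) if and only if `x` is `U`-torsion (`∃ n, U ^ n • x = 0`). -/
theorem homogeneous_image_one_sub_U_iff_U_torsion
    (M : Type*) [AddCommGroup M]
    [Module (Polynomial (ZMod 2)) M] [Module (ZMod 2) M]
    [IsScalarTower (ZMod 2) (Polynomial (ZMod 2)) M]
    (Mi : ℤ → Submodule (ZMod 2) M)
    (hInternal : DirectSum.IsInternal Mi)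
    (hU : ∀ i : ℤ, ∀ x ∈ Mi i, (Polynomial.X : Polynomial (ZMod 2)) • x ∈ Mi (i - 1))
    (j : ℤ) (x : M) (hx : x ∈ Mi j) :
    (∃ y : M, x = y - (Polynomial.X : Polynomial (ZMod 2)) • y) ↔
      (∃ n : ℕ, (Polynomial.X : Polynomial (ZMod 2)) ^ n • x = 0) := by
  classical
  set X : Polynomial (ZMod 2) := Polynomial.X with hX
  constructor
  · rintro ⟨y, hy⟩
    set e : (DirectSum ℤ fun i => Mi i) ≃ₗ[ZMod 2] M :=
      LinearEquiv.ofBijective (DirectSum.coeLinearMap Mi) hInternal with he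
    set P : ℤ → (M →ₗ[ZMod 2] M) := fun k =>
      (Mi k).subtype ∘ₗ (DirectSum.component (ZMod 2) ℤ (fun i => Mi i) k) ∘ₗ
        e.symm.toLinearMap with hP
    set p : ℤ → M → M := fun k m => P k m with hp
    have hp_def : ∀ k m, p k m = ((e.symm m) k : M) := fun k m => rfl
    have hp_mem : ∀ k m, p k m ∈ Mi k := fun k m => ((e.symm m) k).2
    have hp_of : ∀ i k m, m ∈ Mi i → p k m = if k = i then m else 0 := by
      intro i k m hm
      by_cases h : k = i
      · subst h
        rw [hp_def, hInternal.ofBijective_coeLinearMap_of_mem hm]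
        simp
      · rw [hp_def, hInternal.ofBijective_coeLinearMap_of_mem_ne (Ne.symm h) hm]
        simp [h]
    have hcoe : ∀ f : DirectSum ℤ fun i => Mi i,
        e f = ∑ k ∈ DFinsupp.support f, (f k : M) := by
      intro f
      rw [show e f = DirectSum.coeLinearMap Mi f from rfl]
      conv_lhs => rw [← DirectSum.sum_support_of f]
      rw [map_sum]
      simp [DirectSum.coeLinearMap_of]
    have hsum : ∀ m : M, m = ∑ k ∈ DFinsupp.support (e.symm m), p k m := by
      intro m
      conv_lhs => rw [← e.apply_symm_apply m]
      exact hcoe _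
    have hp_zero : ∀ k m, k ∉ DFinsupp.support (e.symm m) → p k m = 0 := by
      intro k m hk
      rw [hp_def, DFinsupp.notMem_support_iff.mp hk]
      rfl
    -- key: p commutes with X up to shift
    have hp_X : ∀ (k : ℤ) (m : M), p k (X • m) = X • p (k + 1) m := by
      intro k m
      conv_lhs => rw [hsum m, Finset.smul_sum]
      rw [show p k = P k from rfl, map_sum]
      have step : ∀ i ∈ DFinsupp.support (e.symm m),
          P k (X • p i m) = if i = k + 1 then X • p i m else 0 := by
        intro i _
        have hiff : (k = i - 1) ↔ (i = k + 1) := by omega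
        rw [show P k (X • p i m) = p k (X • p i m) from rfl,
          hp_of (i - 1) k _ (hU i _ (hp_mem i m)), if_congr hiff rfl rfl]
      rw [Finset.sum_congr rfl step,
        Finset.sum_ite_eq' (DFinsupp.support (e.symm m)) (k + 1)]
      by_cases h : (k + 1) ∈ DFinsupp.support (e.symm m)
      · rw [if_pos h]
      · rw [if_neg h, hp_zero _ _ h, smul_zero]
    -- component equation from x = y - X • y
    have hcomp : ∀ k : ℤ, p k x = p k y - X • p (k + 1) y := by
      intro k
      have hsub : p k (y - X • y) = p k y - p k (X • y) := map_sub (P k) _ _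
      rw [hy, hsub, hp_X]
    have hpx : ∀ k : ℤ, k ≠ j → p k x = 0 := by
      intro k hk
      rw [hp_of j k x hx, if_neg hk]
    have hshift : ∀ k : ℤ, k ≠ j → p k y = X • p (k + 1) y := by
      intro k hk
      have h := hcomp k
      rw [hpx k hk] at h
      linear_combination (norm := module) -h
    -- bound on the support of y
    set B : ℕ := (DFinsupp.support (e.symm y)).sup Int.natAbs with hB
    have hbig : ∀ k : ℤ, B < k.natAbs → p k y = 0 := by
      intro k hk
      apply hp_zero
      intro hmem
      have := Finset.le_sup (f := Int.natAbs) hmem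
      omega
    -- upward vanishing
    have hup : ∀ (m : ℕ) (k : ℤ), j < k → p k y = X ^ m • p (k + m) y := by
      intro m
      induction m with
      | zero => intro k _; simp
      | succ m ih =>
        intro k hk
        rw [hshift k (by omega), ih (k + 1) (by omega), smul_smul, ← pow_succ']
        congr 2
        push_cast
        ring
    have hj1 : p (j + 1) y = 0 := by
      have h := hup (B + (j + 1).natAbs + 1) (j + 1) (by omega)
      rw [hbig (j + 1 + ((B + (j + 1).natAbs + 1 : ℕ) : ℤ)) (by omega), smul_zero] at h
      exact h
    have hxj : x = p j y := by
      have h1 := hcomp j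
      have h2 : p j x = x := by rw [hp_of j j x hx, if_pos rfl]
      rw [h2, hj1, smul_zero, sub_zero] at h1
      exact h1
    -- downward: X ^ n • x = p (j - n) y
    have hdown : ∀ n : ℕ, X ^ n • x = p (j - n) y := by
      intro n
      induction n with
      | zero => simpa using hxj
      | succ n ih =>
        have h := hshift (j - n - 1) (by omega)
        rw [show (j - (n : ℤ) - 1 + 1 : ℤ) = j - n by ring, ← ih, ← mul_smul,
          ← pow_succ'] at h
        rw [show (j - ((n + 1 : ℕ) : ℤ) : ℤ) = j - n - 1 by push_cast; ring]
        exact h.symm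
    refine ⟨B + j.natAbs + 1, ?_⟩
    rw [hdown, hbig (j - ((B + j.natAbs + 1 : ℕ) : ℤ)) (by omega)]
  · rintro ⟨n, hn⟩
    refine ⟨∑ i ∈ Finset.range n, X ^ i • x, ?_⟩
    rw [Finset.smul_sum, ← Finset.sum_sub_distrib]
    have step : ∀ i ∈ Finset.range n, X ^ i • x - X • X ^ i • x
        = X ^ i • x - X ^ (i + 1) • x := by
      intro i _
      rw [smul_smul, ← pow_succ']
    rw [Finset.sum_congr rfl step, Finset.sum_range_sub' (fun i => X ^ i • x)]
    rw [hn, pow_zero, one_smul, sub_zero]
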